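/- arXiv:1506.05964 — 3 statements merged into one kernel-verified Lean document; each statement's English description precedes it below -/
import Mathlib

section
/- Let σ₁ : ℝ³ → ℝ³ be the chart-U₁ expression of the quasi-homogeneous blow-up of weights (2,3,2), σ₁(t, y₁, z₁) = (t², t³·y₁, t²·z₁). Then for every point p = (t, y₁, z₁) ∈ ℝ³ and all vectors u, v ∈ ℝ³, the pulled-back 2-form d(P∘σ₁) ∧ d(E∘σ₁) evaluated at p on (u, v) equals t⁷ · [ (6·y₁² − 6 − 4·z₁)·(u₁v₃ − u₃v₁) + 4·y₁·z₁·(u₂v₁ − u₁v₂) + 2·t·y₁·(u₂v₃ − u₃v₂) ], i.e. the pull-back of dP∧dε factors as a power of the exceptional-divisor coordinate t times the strict transform Ω₁ = (6y₁²−6−4z₁) dt∧dz₁ + 4y₁z₁ dy₁∧dt + 2ty₁ dy₁∧dz₁. -/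
/-- The local model of the cusp unfolding: `P (x, y, e) = y² − x³ − e·x²`. -/
noncomputable def Pcusp : ℝ × ℝ × ℝ → ℝ := fun p => p.2.1 ^ 2 - p.1 ^ 3 - p.2.2 * p.1 ^ 2

/-- Projection to the unfolding parameter: `E (x, y, e) = e`. -/
noncomputable def Eproj : ℝ × ℝ × ℝ → ℝ := fun p => p.2.2

/-- Chart-`U₁` expression of the quasi-homogeneous blow-up of weights `(2,3,2)`. -/
noncomputable def σ₁ : ℝ × ℝ × ℝ → ℝ × ℝ × ℝ :=
  fun p => (p.1 ^ 2, p.1 ^ 3 * p.2.1, p.1 ^ 2 * p.2.2)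

/-- The 2-form `dF ∧ dG` evaluated at `p` on vectors `u, v`. -/
noncomputable def wedge (F G : ℝ × ℝ × ℝ → ℝ) (p u v : ℝ × ℝ × ℝ) : ℝ :=
  (fderiv ℝ F p u) * (fderiv ℝ G p v) - (fderiv ℝ F p v) * (fderiv ℝ G p u)

lemma hasFDerivAt_f (p : ℝ × ℝ × ℝ) :
    HasFDerivAt (fun q : ℝ × ℝ × ℝ => q.1*q.1*q.1*q.1*q.1*q.1 * (q.2.1*q.2.1 - 1 - q.2.2))
      ((6 * p.1 ^ 5 * (p.2.1 ^ 2 - 1 - p.2.2)) •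
          (ContinuousLinearMap.fst ℝ ℝ (ℝ × ℝ)) +
        (p.1 ^ 6) • ((2 * p.2.1) •
          ((ContinuousLinearMap.fst ℝ ℝ ℝ).comp (ContinuousLinearMap.snd ℝ ℝ (ℝ × ℝ)))
          - (ContinuousLinearMap.snd ℝ ℝ ℝ).comp (ContinuousLinearMap.snd ℝ ℝ (ℝ × ℝ)))) p := by
  have hx : HasFDerivAt (fun q : ℝ × ℝ × ℝ => q.1)
      (ContinuousLinearMap.fst ℝ ℝ (ℝ × ℝ)) p := hasFDerivAt_fst
  have hy : HasFDerivAt (fun q : ℝ × ℝ × ℝ => q.2.1)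
      ((ContinuousLinearMap.fst ℝ ℝ ℝ).comp (ContinuousLinearMap.snd ℝ ℝ (ℝ × ℝ))) p :=
    hasFDerivAt_fst.comp p hasFDerivAt_snd
  have hz : HasFDerivAt (fun q : ℝ × ℝ × ℝ => q.2.2)
      ((ContinuousLinearMap.snd ℝ ℝ ℝ).comp (ContinuousLinearMap.snd ℝ ℝ (ℝ × ℝ))) p :=
    hasFDerivAt_snd.comp p hasFDerivAt_snd
  have h := (((((hx.mul hx).mul hx).mul hx).mul hx).mul hx).mul (((hy.mul hy).sub_const (1:ℝ)).sub hz)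
  refine h.congr_fderiv ?_
  ext <;>
    simp [ContinuousLinearMap.smul_apply, ContinuousLinearMap.add_apply,
      ContinuousLinearMap.sub_apply, ContinuousLinearMap.comp_apply, smul_eq_mul] <;> ring

lemma hasFDerivAt_g (p : ℝ × ℝ × ℝ) :
    HasFDerivAt (fun q : ℝ × ℝ × ℝ => q.1*q.1 * q.2.2)
      ((2 * p.1 * p.2.2) • (ContinuousLinearMap.fst ℝ ℝ (ℝ × ℝ)) +
        (p.1 ^ 2) •
          ((ContinuousLinearMap.snd ℝ ℝ ℝ).comp (ContinuousLinearMap.snd ℝ ℝ (ℝ × ℝ)))) p := by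
  have hx : HasFDerivAt (fun q : ℝ × ℝ × ℝ => q.1)
      (ContinuousLinearMap.fst ℝ ℝ (ℝ × ℝ)) p := hasFDerivAt_fst
  have hz : HasFDerivAt (fun q : ℝ × ℝ × ℝ => q.2.2)
      ((ContinuousLinearMap.snd ℝ ℝ ℝ).comp (ContinuousLinearMap.snd ℝ ℝ (ℝ × ℝ))) p :=
    hasFDerivAt_snd.comp p hasFDerivAt_snd
  have h := (hx.mul hx).mul hz
  refine h.congr_fderiv ?_
  ext <;>
    simp [ContinuousLinearMap.smul_apply, ContinuousLinearMap.add_apply,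
      ContinuousLinearMap.comp_apply, smul_eq_mul] <;> ring

theorem pullback_chart_U1 (t y₁ z₁ : ℝ) (u v : ℝ × ℝ × ℝ) :
    wedge (Pcusp ∘ σ₁) (Eproj ∘ σ₁) (t, y₁, z₁) u v =
      t ^ 7 * ((6 * y₁ ^ 2 - 6 - 4 * z₁) * (u.1 * v.2.2 - u.2.2 * v.1)
        + 4 * y₁ * z₁ * (u.2.1 * v.1 - u.1 * v.2.1)
        + 2 * t * y₁ * (u.2.1 * v.2.2 - u.2.2 * v.2.1)) := by
  have hP : (Pcusp ∘ σ₁) = fun q : ℝ × ℝ × ℝ => q.1*q.1*q.1*q.1*q.1*q.1 * (q.2.1*q.2.1 - 1 - q.2.2) := by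
    funext q; simp [Pcusp, σ₁, Function.comp]; ring
  have hE : (Eproj ∘ σ₁) = fun q : ℝ × ℝ × ℝ => q.1*q.1 * q.2.2 := by
    funext q; simp only [Eproj, σ₁, Function.comp]; ring
  rw [wedge, hP, hE, (hasFDerivAt_f (t, y₁, z₁)).fderiv, (hasFDerivAt_g (t, y₁, z₁)).fderiv]
  simp [ContinuousLinearMap.smul_apply, ContinuousLinearMap.add_apply,
    ContinuousLinearMap.sub_apply, ContinuousLinearMap.comp_apply, smul_eq_mul]
  ring
end

section
/- Let σ₂ : ℝ³ → ℝ³ be the chart-U₂ expression of the quasi-homogeneous blow-up of weights (2,3,2), σ₂(x₂, t, z₂) = (t²·x₂, t³, t²·z₂). Then for every point p = (x₂, t, z₂) ∈ ℝ³ and all vectors u, v ∈ ℝ³, the pulled-back 2-form d(P∘σ₂) ∧ d(E∘σ₂) evaluated at p on (u, v) equals t⁷ · [ (−6·x₂²·z₂ − 4·x₂·z₂²)·(u₁v₂ − u₂v₁) + (−3·t·x₂² − 2·t·x₂·z₂)·(u₁v₃ − u₃v₁) + (6 − 6·x₂³ − 4·x₂²·z₂)·(u₂v₃ − u₃v₂)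 ], i.e. the pull-back of dP∧dε factors as a power of the exceptional-divisor coordinate t times the strict transform Ω₂ = (6−6x₂³−4x₂²z₂) dt∧dz₂ + (−6x₂²z₂−4x₂z₂²) dx₂∧dt + (−3tx₂²−2tx₂z₂) dx₂∧dz₂. -/
/-- Chart-`U₂` expression of the quasi-homogeneous blow-up of weights `(2,3,2)`:
`σ₂ (x₂, t, z₂) = (t²·x₂, t³, t²·z₂)`. -/
noncomputable def σ₂ : ℝ × ℝ × ℝ → ℝ × ℝ × ℝ :=
  fun p => (p.2.1 ^ 2 * p.1, p.2.1 ^ 3, p.2.1 ^ 2 * p.2.2)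

section aux

lemma h1 (p : ℝ × ℝ × ℝ) : HasFDerivAt (fun q : ℝ × ℝ × ℝ => q.1)
    (ContinuousLinearMap.fst ℝ ℝ (ℝ × ℝ)) p := hasFDerivAt_fst

lemma h2 (p : ℝ × ℝ × ℝ) : HasFDerivAt (fun q : ℝ × ℝ × ℝ => q.2.1)
    ((ContinuousLinearMap.fst ℝ ℝ ℝ).comp (ContinuousLinearMap.snd ℝ ℝ (ℝ × ℝ))) p :=
  hasFDerivAt_fst.comp p hasFDerivAt_snd

lemma h3 (p : ℝ × ℝ × ℝ) : HasFDerivAt (fun q : ℝ × ℝ × ℝ => q.2.2)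
    ((ContinuousLinearMap.snd ℝ ℝ ℝ).comp (ContinuousLinearMap.snd ℝ ℝ (ℝ × ℝ))) p :=
  hasFDerivAt_snd.comp p hasFDerivAt_snd

end aux

theorem pullback_chart_U2 (x₂ t z₂ : ℝ) (u v : ℝ × ℝ × ℝ) :
    wedge (Pcusp ∘ σ₂) (Eproj ∘ σ₂) (x₂, t, z₂) u v =
      t ^ 7 * ((-6 * x₂ ^ 2 * z₂ - 4 * x₂ * z₂ ^ 2) * (u.1 * v.2.1 - u.2.1 * v.1)
        + (-3 * t * x₂ ^ 2 - 2 * t * x₂ * z₂) * (u.1 * v.2.2 - u.2.2 * v.1)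
        + (6 - 6 * x₂ ^ 3 - 4 * x₂ ^ 2 * z₂) * (u.2.1 * v.2.2 - u.2.2 * v.2.1)) := by
  have hPfun : (Pcusp ∘ σ₂) = fun q : ℝ × ℝ × ℝ =>
      (q.2.1 * q.2.1 * q.2.1 * q.2.1 * q.2.1 * q.2.1) * (1 - q.1 * q.1 * q.1 - q.2.2 * (q.1 * q.1)) := by
    funext q; simp only [Function.comp_apply, Pcusp, σ₂]; ring
  have hEfun : (Eproj ∘ σ₂) = fun q : ℝ × ℝ × ℝ => q.2.1 * q.2.1 * q.2.2 := by
    funext q; simp only [Function.comp_apply, Eproj, σ₂]; ring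
  set p : ℝ × ℝ × ℝ := (x₂, t, z₂)
  have a1 := h1 p; have a2 := h2 p; have a3 := h3 p
  have hP := ((((a2.mul a2).mul a2).mul a2).mul a2).mul a2 |>.mul
      ((((hasFDerivAt_const (1:ℝ) p).sub ((a1.mul a1).mul a1)).sub (a3.mul (a1.mul a1))))
  have hE := (a2.mul a2).mul a3
  have fP := hP.fderiv
  have fE := hE.fderiv
  simp only [Pi.mul_def, Pi.sub_def] at fP fE
  simp only [wedge, hPfun, hEfun, fP, fE]
  simp only [ContinuousLinearMap.add_apply, ContinuousLinearMap.sub_apply,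
    ContinuousLinearMap.smul_apply, ContinuousLinearMap.comp_apply,
    ContinuousLinearMap.coe_fst', ContinuousLinearMap.coe_snd', ContinuousLinearMap.zero_apply, smul_eq_mul, p]
  ring
end

section
/- Let σ₃ : ℝ³ → ℝ³ be the chart-U₃ expression of the quasi-homogeneous blow-up of weights (2,3,2), σ₃(x₃, y₃, t) = (t²·x₃, t³·y₃, t²). Then for every point p = (x₃, y₃, t) ∈ ℝ³ and all vectors u, v ∈ ℝ³, the pulled-back 2-form d(P∘σ₃) ∧ d(E∘σ₃) evaluated at p on (u, v) equals t⁷ · [ (−6·x₃² − 4·x₃)·(u₁v₃ − u₃v₁) + 4·y₃·(u₂v₃ − u₃v₂) ], i.e. the pull-back of dP∧dε factors as a power of the exceptional-divisor coordinate t times the strict transform Ω₃ = (−6x₃²−4x₃) dx₃∧dt + 4y₃ dy₃∧dt. -/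
/-- Chart-`U₃` expression of the quasi-homogeneous blow-up of weights `(2,3,2)`:
`σ₃ (x₃, y₃, t) = (t²·x₃, t³·y₃, t²)`. -/
noncomputable def σ₃ : ℝ × ℝ × ℝ → ℝ × ℝ × ℝ :=
  fun p => (p.2.2 ^ 2 * p.1, p.2.2 ^ 3 * p.2.1, p.2.2 ^ 2)

private lemma hx (p : ℝ×ℝ×ℝ) : HasFDerivAt (fun q : ℝ×ℝ×ℝ => q.1)
    (ContinuousLinearMap.fst ℝ ℝ (ℝ×ℝ)) p := hasFDerivAt_fst

private lemma hy (p : ℝ×ℝ×ℝ) : HasFDerivAt (fun q : ℝ×ℝ×ℝ => q.2.1)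
    ((ContinuousLinearMap.fst ℝ ℝ ℝ).comp (ContinuousLinearMap.snd ℝ ℝ (ℝ×ℝ))) p :=
  hasFDerivAt_fst.comp p hasFDerivAt_snd

private lemma ht (p : ℝ×ℝ×ℝ) : HasFDerivAt (fun q : ℝ×ℝ×ℝ => q.2.2)
    ((ContinuousLinearMap.snd ℝ ℝ ℝ).comp (ContinuousLinearMap.snd ℝ ℝ (ℝ×ℝ))) p :=
  hasFDerivAt_snd.comp p hasFDerivAt_snd

private lemma fderivP (x₃ y₃ t : ℝ) (u : ℝ×ℝ×ℝ) :
    fderiv ℝ (Pcusp ∘ σ₃) (x₃, y₃, t) u =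
      6*t^5*(y₃^2 - x₃^3 - x₃^2)*u.2.2 + t^6*(2*y₃*u.2.1 - 3*x₃^2*u.1 - 2*x₃*u.1) := by
  have hf : (Pcusp ∘ σ₃) = fun p : ℝ×ℝ×ℝ =>
      p.2.2*p.2.2*p.2.2*p.2.2*p.2.2*p.2.2*(p.2.1*p.2.1 - p.1*p.1*p.1 - p.1*p.1) := by
    funext p; simp [Pcusp, σ₃, Function.comp]; ring
  rw [hf]
  set p : ℝ×ℝ×ℝ := (x₃, y₃, t)
  have h :=
    ((((((ht p).mul (ht p)).mul (ht p)).mul (ht p)).mul (ht p)).mul (ht p)).mul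
      (((((hy p).mul (hy p)).sub (((hx p).mul (hx p)).mul (hx p))).sub ((hx p).mul (hx p))))
  erw [h.fderiv]
  simp [p]
  ring

private lemma fderivE (x₃ y₃ t : ℝ) (u : ℝ×ℝ×ℝ) :
    fderiv ℝ (Eproj ∘ σ₃) (x₃, y₃, t) u = 2*t*u.2.2 := by
  have hf : (Eproj ∘ σ₃) = fun p : ℝ×ℝ×ℝ => p.2.2*p.2.2 := by
    funext p; simp [Eproj, σ₃, Function.comp]; ring
  rw [hf]
  set p : ℝ×ℝ×ℝ := (x₃, y₃, t)
  erw [((ht p).mul (ht p)).fderiv]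
  simp [p]; ring

theorem pullback_chart_U3 (x₃ y₃ t : ℝ) (u v : ℝ × ℝ × ℝ) :
    wedge (Pcusp ∘ σ₃) (Eproj ∘ σ₃) (x₃, y₃, t) u v =
      t ^ 7 * ((-6 * x₃ ^ 2 - 4 * x₃) * (u.1 * v.2.2 - u.2.2 * v.1)
        + 4 * y₃ * (u.2.1 * v.2.2 - u.2.2 * v.2.1)) := by
  unfold wedge
  rw [fderivP, fderivP, fderivE, fderivE]
  ring
end
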